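/- arXiv:2010.10643 — 2 statements merged into one kernel-verified Lean document; each statement's English description precedes it below -/
import Mathlib

section
/- (Nimber Extension Rule) For any impartial games G, H and any nimber *n: (G ∘ H) + *n is a P-position if and only if (G + *n) ∘ H is a P-position. -/
/-- Finite impartial games, given by their (finite list of) options. -/
inductive IGame : Type where
  | mk : List IGame → IGame

/-- The empty game `E`, with no options. -/
abbrev E : IGame := .mk []

/-- The list of options of a game. -/
def IGame.opts : IGame → List IGame
  | .mk l => l

theorem IGame.sizeOf_lt_of_mem {g : IGame} {l : List IGame} (h : g ∈ l) :
    sizeOf g < sizeOf (IGame.mk l) := by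
  have := List.sizeOf_lt_of_mem h
  simp only [IGame.mk.sizeOf_spec]; omega

/-- The pass operator: `E* = E`; for `G` with options, `G*` has options
`G` together with `g*` for each option `g` of `G`. -/
def pass : IGame → IGame
  | .mk [] => .mk []
  | .mk l => .mk (.mk l :: l.attach.map fun g => pass g.1)
decreasing_by
  exact IGame.sizeOf_lt_of_mem g.2

/-- The split sum `G ∘ H`. -/
def split : IGame → IGame → IGame
  | .mk [], _ => .mk []
  | .mk gs, .mk [] => .mk gs
  | .mk gs, .mk hs =>
      .mk ((hs.attach.map fun h => split (.mk gs) h.1) ++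
           (gs.attach.map fun g => split g.1 (.mk hs)))
termination_by G H => sizeOf G + sizeOf H
decreasing_by
  · have := IGame.sizeOf_lt_of_mem h.2; omega
  · have := IGame.sizeOf_lt_of_mem g.2; omega

/-- Disjunctive sum of games. -/
def addG : IGame → IGame → IGame
  | .mk gs, .mk hs =>
      .mk ((gs.attach.map fun g => addG g.1 (.mk hs)) ++
           (hs.attach.map fun h => addG (.mk gs) h.1))
termination_by G H => sizeOf G + sizeOf H
decreasing_by
  · have := IGame.sizeOf_lt_of_mem g.2; omega
  · have := IGame.sizeOf_lt_of_mem h.2; omega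

/-- The nimber `*n`, with options `*0, …, *(n-1)`. -/
def star : ℕ → IGame
  | n => .mk ((List.range n).attach.map fun k => star k.1)
termination_by n => n
decreasing_by have := List.mem_range.mp k.2; omega

/-- `G` is a P-position (previous player wins under normal play):
every option is an N-position. -/
def PPos : IGame → Prop
  | .mk l => ∀ g ∈ l.attach, ¬ PPos g.1
decreasing_by exact IGame.sizeOf_lt_of_mem g.2

/-- Identity of game trees (extensionally: same set of options, recursively). -/
def Ident : IGame → IGame → Prop
  | .mk gs, .mk hs =>
      (∀ g ∈ gs.attach, ∃ h ∈ hs.attach, Ident g.1 h.1) ∧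
      (∀ h ∈ hs.attach, ∃ g ∈ gs.attach, Ident g.1 h.1)
termination_by G H => sizeOf G + sizeOf H
decreasing_by
  · have := IGame.sizeOf_lt_of_mem g.2
    have := IGame.sizeOf_lt_of_mem h.2; omega
  · have := IGame.sizeOf_lt_of_mem g.2
    have := IGame.sizeOf_lt_of_mem h.2; omega

/-!
Induct on `G`, `H` and `n` simultaneously. When `G` and `H` both have options, the options of
`(G ∘ H) + *n` are `(G ∘ h) + *n`, `(g ∘ H) + *n` and `(G ∘ H) + *k` for `k < n`, while those of
`(G + *n) ∘ H` are `(G + *n) ∘ h`, `(g + *n) ∘ H` and `(G + *k) ∘ H`; by induction corresponding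
options are P-positions together, hence so are the two games. If `H = E` both games are `G + *n`.
If `G = E` both are P-positions exactly when `n = 0`: `E ∘ H = E`, and for `n > 0` the game
`*n ∘ H` has the P-position `*0 ∘ H = E` (or `*0`, if `H = E`) among its options.
-/

theorem star_eq (n : ℕ) : _root_.star n = .mk ((List.range n).map _root_.star) := by
  rw [_root_.star, List.attach_map_val]

theorem pPos_mk (l : List IGame) : PPos (.mk l) ↔ ∀ g ∈ l, ¬ PPos g := by
  rw [PPos]
  exact ⟨fun h g hg => h ⟨g, hg⟩ (List.mem_attach _ _), fun h g _ => h g.1 g.2⟩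

theorem pPos_E : PPos E := by
  simp [pPos_mk]

theorem not_pPos_mk_of_mem {g : IGame} {l : List IGame} (hg : g ∈ l) (h : PPos g) :
    ¬ PPos (.mk l) :=
  fun hl => (pPos_mk l).mp hl g hg h

theorem addG_mk (gs hs : List IGame) :
    addG (.mk gs) (.mk hs) =
      .mk (gs.map (fun g => addG g (.mk hs)) ++ hs.map (fun h => addG (.mk gs) h)) := by
  rw [addG]; simp only [List.map_subtype, List.unattach_attach]

theorem addG_mk_star (gs : List IGame) (n : ℕ) :
    addG (.mk gs) (_root_.star n) =
      .mk (gs.map (fun g => addG g (_root_.star n)) ++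
        (List.range n).map (fun k => addG (.mk gs) (_root_.star k))) := by
  conv_lhs => rw [star_eq, addG_mk, List.map_map]
  simp only [Function.comp_def, ← star_eq]

theorem E_addG : ∀ G : IGame, addG E G = G
  | .mk hs => by
    rw [addG_mk, List.map_nil, List.nil_append]
    congr 1
    conv_rhs => rw [← List.map_id hs]
    exact List.map_congr_left fun h hh => E_addG h
decreasing_by exact IGame.sizeOf_lt_of_mem hh

theorem E_split (H : IGame) : split E H = E := by
  rw [split]

theorem split_E (G : IGame) : split G E = G := by
  obtain ⟨_ | ⟨g, gs⟩⟩ := G <;> rw [split]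
  exact List.cons_ne_nil g gs

theorem split_mk {gs hs : List IGame} (hg : gs ≠ []) (hh : hs ≠ []) :
    split (.mk gs) (.mk hs) =
      .mk (hs.map (fun h => split (.mk gs) h) ++ gs.map (fun g => split g (.mk hs))) := by
  rw [split]
  · simp only [List.map_subtype, List.unattach_attach]
  exacts [hg, hh]

theorem star_zero_eq_E : _root_.star 0 = E := by
  rw [star_eq, List.range_zero, List.map_nil]

theorem star_mem_range_map_star {k n : ℕ} (hk : k < n) :
    _root_.star k ∈ (List.range n).map _root_.star :=
  List.mem_map_of_mem (List.mem_range.mpr hk)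

theorem pPos_star_iff (n : ℕ) : PPos (_root_.star n) ↔ n = 0 := by
  refine ⟨fun h => ?_, fun hn => hn ▸ star_zero_eq_E ▸ pPos_E⟩
  by_contra hn
  refine not_pPos_mk_of_mem (star_mem_range_map_star (Nat.pos_of_ne_zero hn)) ?_ (star_eq n ▸ h)
  exact star_zero_eq_E ▸ pPos_E

theorem pPos_split_star_iff (n : ℕ) (H : IGame) : PPos (split (_root_.star n) H) ↔ n = 0 := by
  obtain ⟨hs⟩ := H
  rcases eq_or_ne hs [] with rfl | hh
  · rw [split_E, pPos_star_iff]
  rcases Nat.eq_zero_or_pos n with rfl | hn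
  · simp only [star_zero_eq_E, E_split, pPos_E]
  refine iff_of_false ?_ hn.ne'
  have hne : (List.range n).map _root_.star ≠ [] := by simpa using hn.ne'
  rw [star_eq, split_mk hne hh]
  have hmem : split (_root_.star 0) (.mk hs) ∈
      ((List.range n).map _root_.star).map (split · (.mk hs)) :=
    List.mem_map_of_mem (star_mem_range_map_star hn)
  refine not_pPos_mk_of_mem (List.mem_append_right _ hmem) ?_
  rw [star_zero_eq_E, E_split]
  exact pPos_E

theorem addG_split_mk_star {gs hs : List IGame} (hg : gs ≠ []) (hh : hs ≠ []) (n : ℕ) :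
    addG (split (.mk gs) (.mk hs)) (_root_.star n) =
      .mk (hs.map (fun h => addG (split (.mk gs) h) (_root_.star n)) ++
        gs.map (fun g => addG (split g (.mk hs)) (_root_.star n)) ++
        (List.range n).map (fun k => addG (split (.mk gs) (.mk hs)) (_root_.star k))) := by
  rw [split_mk hg hh, addG_mk_star, List.map_append, List.map_map, List.map_map, ← split_mk hg hh]
  rfl

theorem split_addG_mk_star {gs hs : List IGame} (hg : gs ≠ []) (hh : hs ≠ []) (n : ℕ) :
    split (addG (.mk gs) (_root_.star n)) (.mk hs) =
      .mk (hs.map (fun h => split (addG (.mk gs) (_root_.star n)) h) ++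
        gs.map (fun g => split (addG g (_root_.star n)) (.mk hs)) ++
        (List.range n).map (fun k => split (addG (.mk gs) (_root_.star k)) (.mk hs))) := by
  have hne : gs.map (fun g => addG g (_root_.star n)) ++
      (List.range n).map (fun k => addG (.mk gs) (_root_.star k)) ≠ [] := by simp [hg]
  rw [addG_mk_star, split_mk hne hh, List.map_append, List.map_map, List.map_map, ← addG_mk_star,
    List.append_assoc]
  rfl

/-- Nimber Extension Rule: `(G ∘ H) + *n` is a P-position iff
`(G + *n) ∘ H` is a P-position. -/
theorem nimber_extension_rule (G H : IGame) (n : ℕ) :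
    PPos (addG (split G H) (star n)) ↔ PPos (split (addG G (star n)) H) := by
  obtain ⟨gs⟩ := G
  obtain ⟨hs⟩ := H
  rcases eq_or_ne hs [] with rfl | hh
  · rw [split_E, split_E]
  rcases eq_or_ne gs [] with rfl | hg
  · rw [E_split, E_addG, pPos_star_iff, pPos_split_star_iff]
  rw [addG_split_mk_star hg hh, split_addG_mk_star hg hh, pPos_mk, pPos_mk]
  simp only [List.forall_mem_append, List.forall_mem_map, List.mem_range]
  refine and_congr (and_congr ?_ ?_) ?_ <;> refine forall₂_congr fun x hx => not_congr ?_
  · exact nimber_extension_rule (.mk gs) x n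
  · exact nimber_extension_rule x (.mk hs) n
  · exact nimber_extension_rule (.mk gs) (.mk hs) x
termination_by sizeOf G + sizeOf H + n
decreasing_by
  · have := IGame.sizeOf_lt_of_mem hx; omega
  · have := IGame.sizeOf_lt_of_mem hx; omega
  · omega
end

section
/- For natural numbers a, b, c: if the Grundy value of two-pile Nim with a pass (a,b)* equals c, then three-pile Nim with a pass (a,b,c)* is a P-position. -/
/-!
By Sprague–Grundy the hypothesis says that `(a,b)*` has Grundy value `c`, so it suffices to show,
by induction on `G`, that `(G + *n)*` is a P-position exactly when `n = 𝒢(G*)`. Write `N = 𝒢(G*)`.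
For `k < N`, `k` is the value of `G` or of some `g*` with `g` an option of `G`, so `(G + *k)*` has
the P-option `G + *k` or `(g + *k)*`. The options of `(G + *N)*` are `G + *N`, an N-position since
`𝒢(G) ≠ N` (unless `G` has no options, and then neither has `G + *0`), the games `(g + *N)*` with
`𝒢(g*) ≠ N`, and the games `(G + *k)*` with `k < N`. For `n > N`, `(G + *n)*` has the P-option
`(G + *N)*`.
-/

lemma opts_mk (l : List IGame) : (IGame.mk l).opts = l := rfl

lemma sizeOf_lt_of_mem_opts {g G : IGame} (h : g ∈ G.opts) : sizeOf g < sizeOf G := by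
  cases G
  exact IGame.sizeOf_lt_of_mem h

theorem IGame.induction {motive : IGame → Prop}
    (ind : ∀ G, (∀ g ∈ G.opts, motive g) → motive G) (G : IGame) : motive G :=
  ind G fun g _ => IGame.induction ind g
termination_by sizeOf G
decreasing_by exact sizeOf_lt_of_mem_opts ‹_›

lemma pPos_iff {G : IGame} : PPos G ↔ ∀ g ∈ G.opts, ¬ PPos g := by
  cases G
  rw [PPos]
  exact ⟨fun h g hg => h ⟨g, hg⟩ (List.mem_attach _ _), fun h g _ => h g.1 g.2⟩

lemma not_pPos_of_mem_opts {g G : IGame} (hg : g ∈ G.opts) (h : PPos g) : ¬ PPos G :=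
  fun hG => pPos_iff.1 hG g hg h

lemma opts_star (n : ℕ) : (_root_.star n).opts = (List.range n).map _root_.star := by
  rw [_root_.star, opts_mk, List.attach_map_val]

lemma star_mem_opts_star {k n : ℕ} (h : k < n) : _root_.star k ∈ (_root_.star n).opts := by
  rw [opts_star]
  exact List.mem_map_of_mem (List.mem_range.2 h)

lemma opts_addG (G H : IGame) :
    (addG G H).opts = G.opts.map (addG · H) ++ H.opts.map (addG G ·) := by
  cases G; cases H
  rw [addG, opts_mk, List.attach_map_val (f := (addG · _)), List.attach_map_val (f := (addG _ ·))]
  rfl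

lemma addG_mem_opts_addG_left {g G : IGame} (H : IGame) (hg : g ∈ G.opts) :
    addG g H ∈ (addG G H).opts := by
  rw [opts_addG]
  exact List.mem_append_left _ (List.mem_map_of_mem hg)

lemma addG_mem_opts_addG_right {h H : IGame} (G : IGame) (hh : h ∈ H.opts) :
    addG G h ∈ (addG G H).opts := by
  rw [opts_addG]
  exact List.mem_append_right _ (List.mem_map_of_mem hh)

lemma opts_pass {G : IGame} (h : G.opts ≠ []) : (pass G).opts = G :: G.opts.map pass := by
  obtain ⟨l⟩ := G
  rw [pass.eq_2 l h, opts_mk, List.attach_map_val]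
  rfl

lemma opts_pass_eq_nil {G : IGame} (h : G.opts = []) : (pass G).opts = [] := by
  obtain ⟨l⟩ := G
  cases h
  rw [pass.eq_1, opts_mk]

lemma mem_opts_pass {t G : IGame} :
    t ∈ (pass G).opts ↔ (G.opts ≠ [] ∧ t = G) ∨ ∃ g ∈ G.opts, pass g = t := by
  by_cases hG : G.opts = []
  · simp [opts_pass_eq_nil hG, hG]
  · simp [opts_pass hG, hG, eq_comm]

lemma pass_mem_opts_pass {g G : IGame} (hg : g ∈ G.opts) : pass g ∈ (pass G).opts :=
  mem_opts_pass.2 (Or.inr ⟨g, hg, rfl⟩)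

lemma pPos_pass_iff {H : IGame} :
    PPos (pass H) ↔ (H.opts ≠ [] → ¬ PPos H) ∧ ∀ h ∈ H.opts, ¬ PPos (pass h) := by
  simp only [pPos_iff (G := pass H), mem_opts_pass]
  grind

noncomputable def mex (l : List ℕ) : ℕ := sInf {n | n ∉ l}

lemma mex_not_mem (l : List ℕ) : mex l ∉ l :=
  Nat.sInf_mem l.finite_toSet.infinite_compl.nonempty

lemma mem_of_lt_mex {l : List ℕ} {k : ℕ} (h : k < mex l) : k ∈ l := by
  by_contra hk
  exact (Nat.sInf_le hk).not_gt h

lemma mex_eq_of {l : List ℕ} {n : ℕ} (hn : n ∉ l) (hlt : ∀ k < n, k ∈ l) : mex l = n :=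
  le_antisymm (Nat.sInf_le hn) (not_lt.1 fun h => mex_not_mem l (hlt _ h))

noncomputable def grundy : IGame → ℕ
  | .mk l => mex (l.attach.map fun g => grundy g.1)
decreasing_by exact IGame.sizeOf_lt_of_mem g.2

lemma grundy_eq_mex (G : IGame) : grundy G = mex (G.opts.map grundy) := by
  cases G
  rw [grundy, List.attach_map_val, opts_mk]

lemma grundy_ne_of_mem_opts {g G : IGame} (hg : g ∈ G.opts) : grundy g ≠ grundy G := by
  rw [grundy_eq_mex G]
  exact fun h => mex_not_mem _ (h ▸ List.mem_map_of_mem (f := grundy) hg)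

lemma exists_mem_opts_grundy_eq {G : IGame} {k : ℕ} (hk : k < grundy G) :
    ∃ g ∈ G.opts, grundy g = k := by
  rw [grundy_eq_mex] at hk
  exact List.mem_map.1 (mem_of_lt_mex hk)

lemma grundy_eq_of {G : IGame} {n : ℕ} (hne : ∀ g ∈ G.opts, grundy g ≠ n)
    (hex : ∀ k < n, ∃ g ∈ G.opts, grundy g = k) : grundy G = n := by
  rw [grundy_eq_mex]
  refine mex_eq_of (fun h => ?_) fun k hk => List.mem_map.2 (hex k hk)
  obtain ⟨g, hg, rfl⟩ := List.mem_map.1 h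
  exact hne g hg rfl

lemma grundy_eq_zero_of_opts_eq_nil {G : IGame} (h : G.opts = []) : grundy G = 0 :=
  grundy_eq_of (fun g hg => by simp [h] at hg) (by omega)

theorem pPos_iff_grundy_eq_zero (G : IGame) : PPos G ↔ grundy G = 0 := by
  induction G using IGame.induction with
  | ind G ih =>
    rw [pPos_iff]
    constructor
    · exact fun h => grundy_eq_of (fun g hg => mt (ih g hg).2 (h g hg)) (by omega)
    · intro h g hg hPg
      exact grundy_ne_of_mem_opts hg (((ih g hg).1 hPg).trans h.symm)

theorem grundy_star (n : ℕ) : grundy (star n) = n := by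
  induction n using Nat.strong_induction_on with
  | _ n ih =>
    refine grundy_eq_of (fun g hg => ?_) fun k hk => ⟨_, star_mem_opts_star hk, ih k hk⟩
    rw [opts_star] at hg
    obtain ⟨k, hk, rfl⟩ := List.mem_map.1 hg
    rw [ih k (List.mem_range.1 hk)]
    exact (List.mem_range.1 hk).ne

theorem grundy_addG (G H : IGame) : grundy (addG G H) = grundy G ^^^ grundy H := by
  induction G using IGame.induction generalizing H with
  | ind G ihG =>
    induction H using IGame.induction with
    | ind H ihH =>
      refine grundy_eq_of (fun t ht => ?_) fun k hk => ?_
      · rcases List.mem_append.1 ((opts_addG G H) ▸ ht) with ht | ht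
        · obtain ⟨g, hg, rfl⟩ := List.mem_map.1 ht
          rw [ihG g hg]
          exact fun h => grundy_ne_of_mem_opts hg ((xor_left_involutive _).injective h)
        · obtain ⟨h, hh, rfl⟩ := List.mem_map.1 ht
          rw [ihH h hh]
          exact fun e => grundy_ne_of_mem_opts hh ((xor_right_involutive _).injective e)
      · rcases Nat.lt_xor_cases hk with hlt | hlt
        · obtain ⟨g, hg, hgk⟩ := exists_mem_opts_grundy_eq hlt
          refine ⟨_, addG_mem_opts_addG_left H hg, ?_⟩
          rw [ihG g hg, hgk, xor_cancel_right]
        · obtain ⟨h, hh, hhk⟩ := exists_mem_opts_grundy_eq hlt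
          refine ⟨_, addG_mem_opts_addG_right G hh, ?_⟩
          rw [ihH h hh, hhk, xor_xor_cancel_comm_assoc]

theorem pPos_addG_star_iff {G : IGame} {n : ℕ} : PPos (addG G (star n)) ↔ grundy G = n := by
  rw [pPos_iff_grundy_eq_zero, grundy_addG, grundy_star, xor_eq_zero_iff]

lemma grundy_ne_grundy_pass {G : IGame} (h : G.opts ≠ []) : grundy G ≠ grundy (pass G) :=
  grundy_ne_of_mem_opts (mem_opts_pass.2 (Or.inl ⟨h, rfl⟩))

lemma grundy_pass_ne_of_mem_opts {g G : IGame} (hg : g ∈ G.opts) :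
    grundy (pass g) ≠ grundy (pass G) :=
  grundy_ne_of_mem_opts (pass_mem_opts_pass hg)

lemma exists_of_lt_grundy_pass {G : IGame} {k : ℕ} (hk : k < grundy (pass G)) :
    (G.opts ≠ [] ∧ grundy G = k) ∨ ∃ g ∈ G.opts, grundy (pass g) = k := by
  obtain ⟨t, ht, rfl⟩ := exists_mem_opts_grundy_eq hk
  rcases mem_opts_pass.1 ht with ⟨hG, rfl⟩ | ⟨g, hg, rfl⟩
  · exact Or.inl ⟨hG, rfl⟩
  · exact Or.inr ⟨g, hg, rfl⟩

lemma not_pPos_pass_addG_star_of_lt {G : IGame}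
    (ih : ∀ g ∈ G.opts, ∀ n, PPos (pass (addG g (star n))) ↔ grundy (pass g) = n)
    {k : ℕ} (hk : k < grundy (pass G)) : ¬ PPos (pass (addG G (star k))) := by
  rw [pPos_pass_iff]
  rcases exists_of_lt_grundy_pass hk with ⟨hG, hGk⟩ | ⟨g, hg, hgk⟩
  · refine fun h => h.1 ?_ (pPos_addG_star_iff.2 hGk)
    rw [opts_addG]
    simp [hG]
  · exact fun h => h.2 _ (addG_mem_opts_addG_left _ hg) ((ih g hg k).2 hgk)

lemma pPos_pass_addG_star_grundy_pass {G : IGame}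
    (ih : ∀ g ∈ G.opts, ∀ n, PPos (pass (addG g (star n))) ↔ grundy (pass g) = n) :
    PPos (pass (addG G (star (grundy (pass G))))) := by
  rw [pPos_pass_iff]
  refine ⟨fun hne hP => ?_, fun t ht => ?_⟩
  · have hG : G.opts ≠ [] := by
      intro hG
      apply hne
      rw [opts_addG, hG, grundy_eq_zero_of_opts_eq_nil (opts_pass_eq_nil hG), opts_star]
      rfl
    exact grundy_ne_grundy_pass hG (pPos_addG_star_iff.1 hP)
  · rw [opts_addG, opts_star] at ht
    rcases List.mem_append.1 ht with ht | ht
    · obtain ⟨g, hg, rfl⟩ := List.mem_map.1 ht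
      exact fun h => grundy_pass_ne_of_mem_opts hg ((ih g hg _).1 h)
    · obtain ⟨_, hk', rfl⟩ := List.mem_map.1 ht
      obtain ⟨k, hk, rfl⟩ := List.mem_map.1 hk'
      exact not_pPos_pass_addG_star_of_lt ih (List.mem_range.1 hk)

theorem pPos_pass_addG_star_iff (G : IGame) (n : ℕ) :
    PPos (pass (addG G (star n))) ↔ grundy (pass G) = n := by
  induction G using IGame.induction generalizing n with
  | ind G ih =>
    refine ⟨fun h => ?_, fun h => h ▸ pPos_pass_addG_star_grundy_pass ih⟩
    rcases lt_trichotomy n (grundy (pass G)) with hlt | heq | hgt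
    · exact absurd h (not_pPos_pass_addG_star_of_lt ih hlt)
    · exact heq.symm
    · refine absurd h (not_pPos_of_mem_opts ?_ (pPos_pass_addG_star_grundy_pass ih))
      exact pass_mem_opts_pass (addG_mem_opts_addG_right G (star_mem_opts_star hgt))

/-- if the Grundy value of `(a,b)*` is `c` (i.e.
`(a,b)* + *c` is a P-position), then `(a,b,c)*` is a P-position. -/
theorem three_pile_from_two_pile (a b c : ℕ)
    (h : PPos (addG (pass (addG (star a) (star b))) (star c))) :
    PPos (pass (addG (addG (star a) (star b)) (star c))) :=
  (pPos_pass_addG_star_iff _ c).2 (pPos_addG_star_iff.1 h)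
end
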